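/- Convergence of AGT2-QL: let β > 0, let (α_k)_{k≥0} be deterministic step sizes with 0 ≤ α_k ≤ 1, Σ_{k} α_k = ∞ and Σ_{k} α_k² < ∞, and on a probability space let (s_k, a_k, s'_k)_{k≥0} be i.i.d. S×A×S-valued random variables whose common law assigns probability d(s,a)·P(s'|s,a) to (s,a,s'), where d(s,a) > 0 for all (s,a). Define random sequences Qᴬ_k, Qᴮ_k : S×A → ℝ by arbitrary deterministic initializations Qᴬ_0, Qᴮ_0 and the recursion: Qᴬ_{k+1}(s,a) = Qᴬ_k(s,a) + α_k·1{(s,a)=(s_k,a_k)}·(r(s_k,a_k,s'_k) + γ·max_{a'∈A} Qᴮ_k(s'_k,a') − Qᴬ_k(s_k,a_k)) and Qᴮ_{k+1}(s,a) = Qᴮ_k(s,a) + α_k·β·1{(s,a)=(s_k,a_k)}·(Qᴬ_k(s_k,a_k) − Qᴮ_k(s_k,a_k)). Then, with probability one, Qᴬ_k(s,a) → Q*(s,a) and Qᴮ_k(s,a) → Q*(s,a) as k → ∞ for every (s,a) ∈ S×A. -/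

import Mathlib

/-!
Along a fixed sample path write `b_k = α_k · 1{(s_k, a_k) = (s, a)}`. Then
`Qᴬ_{k+1}(s,a) - Q* = (1 - b_k)(Qᴬ_k(s,a) - Q*) + b_k ((T Qᴮ_k - Q*)(s,a) + ζ_k)`, where `ζ_k` is
the one-sample Bellman target minus its mean and `|T Qᴮ_k - Q*| ≤ γ ‖Qᴮ_k - Q*‖`, while `Qᴮ`
averages `Qᴬ` with steps `β b_k`. The iterates are bounded, since both updates are convex
combinations once `α_k β ≤ 1`. If every pair has `∑ b_k = ∞` and the noise sums `∑ b_k ζ_k`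
converge, a scalar comparison argument turns an asymptotic bound `c` on `‖Qᴮ - Q*‖` into `γ c`
for `‖Qᴬ - Q*‖` and then for `‖Qᴮ - Q*‖`; iterating gives convergence. Both conditions hold
almost surely: for the filtration of past samples, `1{visit} - d(s,a)` and `ζ_k` are bounded
martingale differences (the fresh sample is independent of the past, the iterates are functions
of it), and `∑ α_k² < ∞` bounds the martingales `∑ α_k ξ_k` in `L²`, so they converge.
-/

open Finset

/-- Maximum of `Q s' a'` over actions `a'`. -/
noncomputable def maxQ {S A : Type*} [Fintype A] [Nonempty A]
    (Q : S → A → ℝ) (s' : S) : ℝ :=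
  univ.sup' univ_nonempty (fun a' => Q s' a')

/-- The Bellman optimality operator. -/
noncomputable def bellmanT {S A : Type*} [Fintype S] [Fintype A] [Nonempty A]
    (P r : S → A → S → ℝ) (γ : ℝ) (Q : S → A → ℝ) : S → A → ℝ :=
  fun s a => ∑ s', P s a s' * (r s a s' + γ * maxQ Q s')

/-- Sup norm on `ℝ^{S×A}`. -/
noncomputable def supNorm {S A : Type*} [Fintype S] [Fintype A] [Nonempty S] [Nonempty A]
    (Q : S → A → ℝ) : ℝ :=
  univ.sup' univ_nonempty (fun p : S × A => |Q p.1 p.2|)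

open Filter MeasureTheory ProbabilityTheory

open Topology

/-- `limsup u ≤ c`, in a form free of the boundedness side conditions of `Filter.limsup`. -/
def AsymptoticallyLE (u : ℕ → ℝ) (c : ℝ) : Prop :=
  ∀ ε > 0, ∀ᶠ k in atTop, u k ≤ c + ε

lemma tendsto_prod_one_sub_zero {a : ℕ → ℝ} {K : ℕ} (h01 : ∀ k ≥ K, 0 ≤ a k ∧ a k ≤ 1)
    (hdiv : Tendsto (fun n => ∑ k ∈ range n, a k) atTop atTop) :
    Tendsto (fun n => ∏ k ∈ Ico K n, (1 - a k)) atTop (𝓝 0) := by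
  have hexp : Tendsto (fun n => Real.exp (∑ k ∈ range K, a k) *
      Real.exp (-∑ k ∈ range n, a k)) atTop (𝓝 0) := by
    simpa using ((Real.tendsto_exp_atBot.comp (tendsto_neg_atTop_atBot.comp hdiv)).const_mul
      (Real.exp (∑ k ∈ range K, a k)))
  refine tendsto_of_tendsto_of_tendsto_of_le_of_le' tendsto_const_nhds hexp
    (Eventually.of_forall fun n => prod_nonneg fun k hk =>
      sub_nonneg.2 (h01 k (mem_Ico.1 hk).1).2) ?_
  filter_upwards [eventually_ge_atTop K] with n hn
  calc ∏ k ∈ Ico K n, (1 - a k)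
      ≤ ∏ k ∈ Ico K n, Real.exp (-a k) :=
        prod_le_prod (fun k hk => sub_nonneg.2 (h01 k (mem_Ico.1 hk).1).2)
          fun k _ => by linarith [Real.add_one_le_exp (-a k)]
    _ = Real.exp (∑ k ∈ range K, a k) * Real.exp (-∑ k ∈ range n, a k) := by
        rw [← Real.exp_sum, ← Real.exp_add, sum_neg_distrib, sum_Ico_eq_sub _ hn]
        ring_nf

namespace AsymptoticallyLE

variable {u v : ℕ → ℝ} {c d : ℝ}

lemma mono (hv : AsymptoticallyLE v c) (huv : ∀ᶠ k in atTop, u k ≤ v k) :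
    AsymptoticallyLE u c :=
  fun ε hε => ((hv ε hε).and huv).mono fun _ h => h.2.trans h.1

lemma of_forall_le (h : ∀ k, u k ≤ c) : AsymptoticallyLE u c :=
  fun _ hε => Eventually.of_forall fun k => (h k).trans (le_add_of_nonneg_right hε.le)

lemma of_tendsto (h : Tendsto u atTop (𝓝 c)) : AsymptoticallyLE u c :=
  fun _ hε => (h.eventually_lt_const (lt_add_of_pos_right c hε)).mono fun _ h => h.le

lemma add (hu : AsymptoticallyLE u c) (hv : AsymptoticallyLE v d) :
    AsymptoticallyLE (fun k => u k + v k) (c + d) := fun ε hε => by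
  filter_upwards [hu (ε / 2) (half_pos hε), hv (ε / 2) (half_pos hε)] with k hu hv
  linarith

lemma const_mul {γ : ℝ} (hγ : 0 ≤ γ) (hu : AsymptoticallyLE u c) :
    AsymptoticallyLE (fun k => γ * u k) (γ * c) := fun ε hε => by
  have hγ1 : 0 < γ + 1 := by linarith
  filter_upwards [hu (ε / (γ + 1)) (div_pos hε hγ1)] with k hk
  have : γ * (ε / (γ + 1)) ≤ ε := by
    rw [mul_div_assoc', div_le_iff₀ hγ1]
    nlinarith
  nlinarith [mul_le_mul_of_nonneg_left hk hγ]

lemma sup (hu : AsymptoticallyLE u c) (hv : AsymptoticallyLE v c) :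
    AsymptoticallyLE (fun k => max (u k) (v k)) c := fun ε hε => by
  filter_upwards [hu ε hε, hv ε hε] with k hu hv
  exact max_le hu hv

lemma tendsto_zero (h0 : ∀ k, 0 ≤ u k) (hu : AsymptoticallyLE u 0) :
    Tendsto u atTop (𝓝 0) := by
  refine tendsto_order.2 ⟨fun b hb => Eventually.of_forall fun k => hb.trans_le (h0 k),
    fun b hb => ?_⟩
  filter_upwards [hu (b / 2) (half_pos hb)] with k hk
  linarith

lemma pi_norm {ι E : Type*} [Fintype ι] [Nonempty ι] [SeminormedAddCommGroup E]
    {f : ℕ → ι → E} (h : ∀ i, AsymptoticallyLE (fun k => ‖f k i‖) c) :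
    AsymptoticallyLE (fun k => ‖f k‖) c := fun ε hε => by
  filter_upwards [eventually_all.2 fun i => h i ε hε] with k hk
  exact (pi_norm_le_iff_of_nonneg ((norm_nonneg _).trans (hk Classical.ofNonempty))).2 hk

lemma tendsto_zero_of_contracting {γ D : ℝ} (hγ0 : 0 ≤ γ) (hγ1 : γ < 1) (h0 : ∀ k, 0 ≤ u k)
    (hD : ∀ k, u k ≤ D) (hstep : ∀ c, AsymptoticallyLE u c → AsymptoticallyLE u (γ * c)) :
    Tendsto u atTop (𝓝 0) := by
  have hpow : ∀ n, AsymptoticallyLE u (γ ^ n * D) := by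
    intro n
    induction n with
    | zero => simpa using of_forall_le hD
    | succ n ih => simpa [pow_succ, mul_comm, mul_left_comm] using hstep _ ih
  refine tendsto_zero h0 fun ε hε => ?_
  have hsmall : Tendsto (fun n => γ ^ n * D) atTop (𝓝 0) := by
    simpa using (tendsto_pow_atTop_nhds_zero_of_lt_one hγ0 hγ1).mul_const D
  obtain ⟨n, hn⟩ := (hsmall.eventually_lt_const (half_pos hε)).exists
  filter_upwards [hpow n (ε / 2) (half_pos hε)] with k hk
  linarith

variable {a : ℕ → ℝ}

lemma of_le_recursion (h01 : ∀ᶠ k in atTop, 0 ≤ a k ∧ a k ≤ 1)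
    (hdiv : Tendsto (fun n => ∑ k ∈ range n, a k) atTop atTop) (hv : AsymptoticallyLE v c)
    (hrec : ∀ᶠ k in atTop, u (k + 1) ≤ (1 - a k) * u k + a k * v k) :
    AsymptoticallyLE u c := fun ε hε => by
  set c' := c + ε / 2 with hc'
  obtain ⟨K, hK⟩ := eventually_atTop.1 ((h01.and hrec).and (hv (ε / 2) (half_pos hε)))
  have hprod : ∀ n ≥ K, u n - c' ≤ (∏ k ∈ Ico K n, (1 - a k)) * max (u K - c') 0 := by
    intro n hn
    induction n, hn using Nat.le_induction with
    | base => simp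
    | succ n hn ih =>
      obtain ⟨⟨⟨ha0, ha1⟩, hr⟩, hvn⟩ := hK n hn
      rw [prod_Ico_succ_top hn]
      calc u (n + 1) - c' ≤ (1 - a n) * (u n - c') + a n * (v n - c') := by linarith
        _ ≤ (1 - a n) * ((∏ k ∈ Ico K n, (1 - a k)) * max (u K - c') 0) := by
            have : a n * (v n - c') ≤ 0 :=
              mul_nonpos_of_nonneg_of_nonpos ha0 (by rw [hc']; linarith)
            linarith [mul_le_mul_of_nonneg_left ih (sub_nonneg.2 ha1)]
        _ = _ := by ring
  have hsmall : ∀ᶠ n in atTop, (∏ k ∈ Ico K n, (1 - a k)) * max (u K - c') 0 < ε / 2 := by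
    have := (tendsto_prod_one_sub_zero (fun k hk => (hK k hk).1.1) hdiv).mul_const
      (max (u K - c') 0)
    rw [zero_mul] at this
    exact this.eventually_lt_const (half_pos hε)
  filter_upwards [hsmall, eventually_ge_atTop K] with n hn hKn
  linarith [hprod n hKn, hc']

lemma abs_of_recursion {η : ℕ → ℝ} {l : ℝ} (h01 : ∀ᶠ k in atTop, 0 ≤ a k ∧ a k ≤ 1)
    (hdiv : Tendsto (fun n => ∑ k ∈ range n, a k) atTop atTop)
    (hv : AsymptoticallyLE (fun k => |v k|) c)
    (hη : Tendsto (fun n => ∑ k ∈ range n, a k * η k) atTop (𝓝 l))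
    (hrec : ∀ k, u (k + 1) = (1 - a k) * u k + a k * (v k + η k)) :
    AsymptoticallyLE (fun k => |u k|) c := by
  set e : ℕ → ℝ := fun n => ∑ k ∈ range n, a k * η k - l
  have he : AsymptoticallyLE (fun k => |e k|) 0 := by
    refine of_tendsto ?_
    simpa using (hη.sub_const l).abs
  -- `u - e` follows the noiseless recursion with targets `v - e`.
  have hz : AsymptoticallyLE (fun k => |u k - e k|) (c + 0) := by
    refine of_le_recursion h01 hdiv (hv.add he) (h01.mono fun k ⟨ha0, ha1⟩ => ?_)
    have hid : u (k + 1) - e (k + 1) = (1 - a k) * (u k - e k) + a k * (v k - e k) := by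
      simp only [e, sum_range_succ, hrec]
      ring
    rw [hid]
    calc _ ≤ |(1 - a k) * (u k - e k)| + |a k * (v k - e k)| := abs_add_le _ _
      _ ≤ (1 - a k) * |u k - e k| + a k * (|v k| + |e k|) := by
          rw [abs_mul, abs_mul, abs_of_nonneg (sub_nonneg.2 ha1), abs_of_nonneg ha0]
          gcongr
          exact abs_sub _ _
  simpa using (hz.add he).mono (Eventually.of_forall fun k => by
    simpa using abs_add_le (u k - e k) (e k))

end AsymptoticallyLE

lemma le_pow_mul_of_le_mul {u : ℕ → ℝ} {ρ : ℝ} {K : ℕ} (hρ : 1 ≤ ρ) (hu0 : 0 ≤ u 0)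
    (hgrow : ∀ k, u (k + 1) ≤ ρ * u k) (hanti : ∀ k ≥ K, u (k + 1) ≤ u k) (k : ℕ) :
    u k ≤ ρ ^ K * u 0 := by
  have hmin : ∀ k, u k ≤ ρ ^ min k K * u 0 := by
    intro k
    induction k with
    | zero => simp
    | succ k ih =>
      rcases lt_or_ge k K with hk | hk
      · rw [min_eq_left hk, pow_succ', mul_assoc]
        rw [min_eq_left hk.le] at ih
        exact (hgrow k).trans (mul_le_mul_of_nonneg_left ih (by linarith))
      · rw [min_eq_right (hk.trans k.le_succ), ← min_eq_right hk]
        exact (hanti k hk).trans ih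
  exact (hmin k).trans (mul_le_mul_of_nonneg_right (pow_le_pow_right₀ hρ (min_le_right k K)) hu0)

lemma abs_one_sub_mul_add_mul_le {t x y m : ℝ} (ht : 0 ≤ t) (hx : |x| ≤ m) (hy : |y| ≤ m) :
    |(1 - t) * x + t * y| ≤ (|1 - t| + t) * m := by
  calc |(1 - t) * x + t * y| ≤ |1 - t| * |x| + t * |y| := by
        simpa [abs_mul, abs_of_nonneg ht] using abs_add_le ((1 - t) * x) (t * y)
    _ ≤ |1 - t| * m + t * m := by gcongr
    _ = (|1 - t| + t) * m := by ring

lemma abs_sum_mul_le {ι : Type*} [Fintype ι] {p f : ι → ℝ} {B : ℝ} (hp0 : ∀ i, 0 ≤ p i)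
    (hp1 : ∑ i, p i = 1) (hf : ∀ i, |f i| ≤ B) : |∑ i, p i * f i| ≤ B :=
  calc |∑ i, p i * f i| ≤ ∑ i, p i * B := (abs_sum_le_sum_abs _ _).trans <|
        sum_le_sum fun i _ => by
          rw [abs_mul, abs_of_nonneg (hp0 i)]
          exact mul_le_mul_of_nonneg_left (hf i) (hp0 i)
    _ = B := by rw [← sum_mul, hp1, one_mul]

section Bellman

variable {ι κ : Type*} [Fintype ι] [Fintype κ]

lemma abs_apply_le_norm (Q : ι → κ → ℝ) (i : ι) (j : κ) : |Q i j| ≤ ‖Q‖ :=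
  (norm_le_pi_norm (Q i) j).trans (norm_le_pi_norm Q i)

lemma norm_le_of_forall_abs_le {Q : ι → κ → ℝ} {c : ℝ} (hc : 0 ≤ c) (h : ∀ i j, |Q i j| ≤ c) :
    ‖Q‖ ≤ c :=
  (pi_norm_le_iff_of_nonneg hc).2 fun i => (pi_norm_le_iff_of_nonneg hc).2 (h i)

lemma AsymptoticallyLE.norm_of_abs [Nonempty ι] [Nonempty κ] {f : ℕ → ι → κ → ℝ} {c : ℝ}
    (h : ∀ i j, AsymptoticallyLE (fun k => |f k i j|) c) :
    AsymptoticallyLE (fun k => ‖f k‖) c :=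
  AsymptoticallyLE.pi_norm fun i => AsymptoticallyLE.pi_norm (h i)

variable {S A : Type*} [Fintype S] [Fintype A] [Nonempty A]

lemma maxQ_le_maxQ_add_norm (Q Q' : S → A → ℝ) (s' : S) : maxQ Q s' ≤ maxQ Q' s' + ‖Q - Q'‖ :=
  sup'_le _ _ fun a _ => by
    have h1 : Q' s' a ≤ maxQ Q' s' := le_sup' (fun a => Q' s' a) (mem_univ a)
    have h2 := (le_abs_self _).trans (abs_apply_le_norm (Q - Q') s' a)
    simp only [Pi.sub_apply] at h2
    linarith

lemma abs_maxQ_sub_maxQ_le (Q Q' : S → A → ℝ) (s' : S) :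
    |maxQ Q s' - maxQ Q' s'| ≤ ‖Q - Q'‖ :=
  abs_sub_le_iff.2 ⟨by linarith [maxQ_le_maxQ_add_norm Q Q' s'],
    by linarith [maxQ_le_maxQ_add_norm Q' Q s', norm_sub_rev Q Q']⟩

noncomputable def sampleBellman (r : S → A → S → ℝ) (γ : ℝ) (Q : S → A → ℝ) (s : S) (a : A)
    (s' : S) : ℝ :=
  r s a s' + γ * maxQ Q s'

lemma bellmanT_apply (P r : S → A → S → ℝ) (γ : ℝ) (Q : S → A → ℝ) (s : S) (a : A) :
    bellmanT P r γ Q s a = ∑ s', P s a s' * sampleBellman r γ Q s a s' :=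
  rfl

lemma continuous_maxQ (s' : S) : Continuous fun Q : S → A → ℝ => maxQ Q s' :=
  (LipschitzWith.of_dist_le_mul (K := 1) fun Q Q' => by
    simpa [Real.dist_eq, dist_eq_norm] using abs_maxQ_sub_maxQ_le Q Q' s').continuous

lemma continuous_sampleBellman (r : S → A → S → ℝ) (γ : ℝ) (s : S) (a : A) (s' : S) :
    Continuous fun Q => sampleBellman r γ Q s a s' :=
  continuous_const.add (continuous_const.mul (continuous_maxQ s'))

lemma continuous_bellmanT_apply (P r : S → A → S → ℝ) (γ : ℝ) (s : S) (a : A) :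
    Continuous fun Q => bellmanT P r γ Q s a :=
  continuous_finsetSum _ fun s' _ => continuous_const.mul (continuous_sampleBellman r γ s a s')

variable {r : S → A → S → ℝ} {γ : ℝ}

lemma abs_sampleBellman_sub_le (hγ0 : 0 ≤ γ) (Q Q' : S → A → ℝ) (s : S) (a : A) (s' : S) :
    |sampleBellman r γ Q s a s' - sampleBellman r γ Q' s a s'| ≤ γ * ‖Q - Q'‖ := by
  rw [sampleBellman, sampleBellman, add_sub_add_left_eq_sub, ← mul_sub, abs_mul,
    abs_of_nonneg hγ0]
  exact mul_le_mul_of_nonneg_left (abs_maxQ_sub_maxQ_le Q Q' s') hγ0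

lemma abs_sampleBellman_le (hγ0 : 0 ≤ γ) (Q : S → A → ℝ) (s : S) (a : A) (s' : S) :
    |sampleBellman r γ Q s a s'| ≤ ‖r‖ + γ * ‖Q‖ := by
  have h := abs_sampleBellman_sub_le (r := r) hγ0 Q 0 s a s'
  have h0 : sampleBellman r γ 0 s a s' = r s a s' := by simp [sampleBellman, maxQ]
  rw [h0, sub_zero] at h
  have hr : |r s a s'| ≤ ‖r‖ := (abs_apply_le_norm (r s) a s').trans (norm_le_pi_norm r s)
  linarith [abs_sub_abs_le_abs_sub (sampleBellman r γ Q s a s') (r s a s')]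

variable {P : S → A → S → ℝ}

lemma abs_bellmanT_sub_le (hγ0 : 0 ≤ γ) (hP0 : ∀ s a s', 0 ≤ P s a s')
    (hP1 : ∀ s a, ∑ s', P s a s' = 1) (Q Q' : S → A → ℝ) (s : S) (a : A) :
    |bellmanT P r γ Q s a - bellmanT P r γ Q' s a| ≤ γ * ‖Q - Q'‖ := by
  rw [bellmanT_apply, bellmanT_apply, ← sum_sub_distrib]
  simp_rw [← mul_sub]
  exact abs_sum_mul_le (hP0 s a) (hP1 s a) fun s' => abs_sampleBellman_sub_le hγ0 Q Q' s a s'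

lemma abs_bellmanT_le (hγ0 : 0 ≤ γ) (hP0 : ∀ s a s', 0 ≤ P s a s')
    (hP1 : ∀ s a, ∑ s', P s a s' = 1) (Q : S → A → ℝ) (s : S) (a : A) :
    |bellmanT P r γ Q s a| ≤ ‖r‖ + γ * ‖Q‖ :=
  abs_sum_mul_le (hP0 s a) (hP1 s a) fun s' => abs_sampleBellman_le hγ0 Q s a s'

end Bellman

section Path

variable {S A : Type*} [DecidableEq S] [DecidableEq A]

def visit (x : S × A × S) (s : S) (a : A) : ℝ :=
  if s = x.1 ∧ a = x.2.1 then 1 else 0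

lemma visit_nonneg (x : S × A × S) (s : S) (a : A) : 0 ≤ visit x s a := by
  unfold visit; split_ifs <;> norm_num

lemma visit_le_one (x : S × A × S) (s : S) (a : A) : visit x s a ≤ 1 := by
  unfold visit; split_ifs <;> norm_num

variable [Fintype A] [Nonempty A]

structure IsAGT2Path (r : S → A → S → ℝ) (γ β : ℝ) (α : ℕ → ℝ) (x : ℕ → S × A × S)
    (qa qb : ℕ → S → A → ℝ) : Prop where
  qa_succ : ∀ k s a, qa (k + 1) s a = (1 - α k * visit (x k) s a) * qa k s a +
    α k * visit (x k) s a * sampleBellman r γ (qb k) s a (x k).2.2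
  qb_succ : ∀ k s a, qb (k + 1) s a = (1 - α k * β * visit (x k) s a) * qb k s a +
    α k * β * visit (x k) s a * qa k s a

namespace IsAGT2Path

variable {r : S → A → S → ℝ} {γ β : ℝ} {α : ℕ → ℝ} {x : ℕ → S × A × S}
  {qa qb : ℕ → S → A → ℝ}

lemma of_update
    (hqa : ∀ k s a, qa (k + 1) s a = qa k s a +
      α k * (if s = (x k).1 ∧ a = (x k).2.1 then
          r (x k).1 (x k).2.1 (x k).2.2 + γ * maxQ (qb k) (x k).2.2 - qa k (x k).1 (x k).2.1
        else 0))
    (hqb : ∀ k s a, qb (k + 1) s a = qb k s a +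
      α k * β * (if s = (x k).1 ∧ a = (x k).2.1 then
          qa k (x k).1 (x k).2.1 - qb k (x k).1 (x k).2.1 else 0)) :
    IsAGT2Path r γ β α x qa qb := by
  constructor <;> intro k s a
  · rw [hqa, visit, sampleBellman]
    split_ifs with h
    · obtain ⟨rfl, rfl⟩ := h; ring
    · ring
  · rw [hqb, visit]
    split_ifs with h
    · obtain ⟨rfl, rfl⟩ := h; ring
    · ring

variable [Fintype S]

lemma norm_succ_le (h : IsAGT2Path r γ β α x qa qb) (hγ0 : 0 ≤ γ) (hγ1 : γ < 1) (hβ : 0 ≤ β)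
    (hα01 : ∀ k, 0 ≤ α k ∧ α k ≤ 1) (k : ℕ) {ρ : ℝ} (hρ1 : 1 ≤ ρ)
    (hρ : ∀ s a, |1 - α k * β * visit (x k) s a| + α k * β * visit (x k) s a ≤ ρ) :
    max (max ‖qa (k + 1)‖ ‖qb (k + 1)‖) (‖r‖ / (1 - γ)) ≤
      ρ * max (max ‖qa k‖ ‖qb k‖) (‖r‖ / (1 - γ)) := by
  set m := max (max ‖qa k‖ ‖qb k‖) (‖r‖ / (1 - γ))
  have hR : ‖r‖ / (1 - γ) ≤ m := le_max_right _ _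
  have hm0 : 0 ≤ m := (div_nonneg (norm_nonneg r) (by linarith)).trans hR
  have hA : ∀ s a, |qa k s a| ≤ m := fun s a =>
    (abs_apply_le_norm _ s a).trans ((le_max_left _ _).trans (le_max_left _ _))
  have hB : ∀ s a, |qb k s a| ≤ m := fun s a =>
    (abs_apply_le_norm _ s a).trans ((le_max_right _ _).trans (le_max_left _ _))
  -- with `R = ‖r‖ / (1 - γ)`, the target is at most `(1 - γ) R + γ ‖qb k‖ ≤ m`
  have hT : ∀ s a, |sampleBellman r γ (qb k) s a (x k).2.2| ≤ m := fun s a => by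
    have hr : ‖r‖ = (1 - γ) * (‖r‖ / (1 - γ)) := by
      rw [mul_div_cancel₀ _ (by linarith)]
    have hqb : γ * ‖qb k‖ ≤ γ * m :=
      mul_le_mul_of_nonneg_left ((le_max_right _ _).trans (le_max_left _ _)) hγ0
    nlinarith [abs_sampleBellman_le (r := r) hγ0 (qb k) s a (x k).2.2]
  have hρm : m ≤ ρ * m := le_mul_of_one_le_left hm0 hρ1
  refine max_le (max_le ?_ ?_) (hR.trans hρm)
  · refine norm_le_of_forall_abs_le (hm0.trans hρm) fun s a => ?_
    have ht0 := mul_nonneg (hα01 k).1 (visit_nonneg (x k) s a)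
    have ht1 : α k * visit (x k) s a ≤ 1 :=
      mul_le_one₀ (hα01 k).2 (visit_nonneg _ _ _) (visit_le_one _ _ _)
    rw [h.qa_succ]
    refine (abs_one_sub_mul_add_mul_le ht0 (hA s a) (hT s a)).trans (le_of_eq_of_le ?_ hρm)
    rw [abs_of_nonneg (sub_nonneg.2 ht1)]
    ring
  · refine norm_le_of_forall_abs_le (hm0.trans hρm) fun s a => ?_
    have ht0 := mul_nonneg (mul_nonneg (hα01 k).1 hβ) (visit_nonneg (x k) s a)
    rw [h.qb_succ]
    exact (abs_one_sub_mul_add_mul_le ht0 (hB s a) (hA s a)).trans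
      (mul_le_mul_of_nonneg_right (hρ s a) hm0)

lemma norm_le (h : IsAGT2Path r γ β α x qa qb) (hγ0 : 0 ≤ γ) (hγ1 : γ < 1) (hβ : 0 ≤ β)
    (hα01 : ∀ k, 0 ≤ α k ∧ α k ≤ 1) {K : ℕ} (hK : ∀ k ≥ K, α k * β ≤ 1) (k : ℕ) :
    max ‖qa k‖ ‖qb k‖ ≤ (1 + 2 * β) ^ K * max (max ‖qa 0‖ ‖qb 0‖) (‖r‖ / (1 - γ)) := by
  have ht : ∀ k s a, 0 ≤ α k * β * visit (x k) s a ∧ α k * β * visit (x k) s a ≤ α k * β :=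
    fun k s a => ⟨by have := visit_nonneg (x k) s a; have := (hα01 k).1; positivity,
      mul_le_of_le_one_right (mul_nonneg (hα01 k).1 hβ) (visit_le_one _ _ _)⟩
  refine (le_max_left _ _).trans (le_pow_mul_of_le_mul
    (u := fun k => max (max ‖qa k‖ ‖qb k‖) (‖r‖ / (1 - γ))) (by linarith)
    (le_max_of_le_right (div_nonneg (norm_nonneg r) (by linarith))) (fun k => ?_)
    (fun k hk => ?_) k)
  · refine h.norm_succ_le hγ0 hγ1 hβ hα01 k (by linarith) fun s a => ?_
    have hαβ : α k * β ≤ β := mul_le_of_le_one_left hβ (hα01 k).2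
    have := abs_sub (1 : ℝ) (α k * β * visit (x k) s a)
    rw [abs_one, abs_of_nonneg (ht k s a).1] at this
    linarith [ht k s a]
  · refine (h.norm_succ_le hγ0 hγ1 hβ hα01 k le_rfl fun s a => ?_).trans_eq (one_mul _)
    rw [abs_of_nonneg (sub_nonneg.2 ((ht k s a).2.trans (hK k hk)))]
    linarith

variable {P : S → A → S → ℝ} {Qstar : S → A → ℝ}

lemma asymptoticallyLE_qa [Nonempty S] (h : IsAGT2Path r γ β α x qa qb) (hγ0 : 0 ≤ γ)
    (hP0 : ∀ s a s', 0 ≤ P s a s') (hP1 : ∀ s a, ∑ s', P s a s' = 1)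
    (hQstar : bellmanT P r γ Qstar = Qstar) (hα01 : ∀ k, 0 ≤ α k ∧ α k ≤ 1)
    (hvisit : ∀ s a, Tendsto (fun n => ∑ k ∈ range n, α k * visit (x k) s a) atTop atTop)
    (hnoise : ∀ s a, ∃ l, Tendsto (fun n => ∑ k ∈ range n, α k * visit (x k) s a *
      (sampleBellman r γ (qb k) s a (x k).2.2 - bellmanT P r γ (qb k) s a)) atTop (𝓝 l))
    {c : ℝ} (hc : AsymptoticallyLE (fun k => ‖qb k - Qstar‖) c) :
    AsymptoticallyLE (fun k => ‖qa k - Qstar‖) (γ * c) := by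
  refine AsymptoticallyLE.norm_of_abs fun s a => ?_
  obtain ⟨l, hl⟩ := hnoise s a
  refine AsymptoticallyLE.abs_of_recursion (u := fun k => qa k s a - Qstar s a)
    (v := fun k => bellmanT P r γ (qb k) s a - Qstar s a)
    (Eventually.of_forall fun k => ⟨mul_nonneg (hα01 k).1 (visit_nonneg _ _ _),
      mul_le_one₀ (hα01 k).2 (visit_nonneg _ _ _) (visit_le_one _ _ _)⟩)
    (hvisit s a) ((hc.const_mul hγ0).mono (Eventually.of_forall fun k => ?_)) hl fun k => ?_
  · have := abs_bellmanT_sub_le (r := r) hγ0 hP0 hP1 (qb k) Qstar s a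
    rwa [hQstar] at this
  · rw [h.qa_succ]
    ring

lemma asymptoticallyLE_qb [Nonempty S] (h : IsAGT2Path r γ β α x qa qb) (hβ : 0 < β)
    (hα01 : ∀ k, 0 ≤ α k ∧ α k ≤ 1) (hαβ : ∀ᶠ k in atTop, α k * β ≤ 1)
    (hvisit : ∀ s a, Tendsto (fun n => ∑ k ∈ range n, α k * visit (x k) s a) atTop atTop)
    {c : ℝ} (hc : AsymptoticallyLE (fun k => ‖qa k - Qstar‖) c) :
    AsymptoticallyLE (fun k => ‖qb k - Qstar‖) c := by
  refine AsymptoticallyLE.norm_of_abs fun s a => ?_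
  have hdiv : Tendsto (fun n => ∑ k ∈ range n, α k * β * visit (x k) s a) atTop atTop := by
    refine ((hvisit s a).const_mul_atTop hβ).congr fun n => ?_
    rw [mul_sum]
    exact sum_congr rfl fun k _ => by ring
  refine AsymptoticallyLE.abs_of_recursion (u := fun k => qb k s a - Qstar s a)
    (v := fun k => qa k s a - Qstar s a) (η := 0) (l := 0)
    (hαβ.mono fun k hk => ⟨by have := visit_nonneg (x k) s a; have := (hα01 k).1; positivity,
      (mul_le_of_le_one_right (mul_nonneg (hα01 k).1 hβ.le) (visit_le_one _ _ _)).trans hk⟩)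
    hdiv (hc.mono (Eventually.of_forall fun k => abs_apply_le_norm (qa k - Qstar) s a))
    (by simp) fun k => ?_
  simp only [Pi.zero_apply, add_zero]
  rw [h.qb_succ]
  ring

theorem tendsto [Nonempty S] (h : IsAGT2Path r γ β α x qa qb) (hγ0 : 0 ≤ γ) (hγ1 : γ < 1)
    (hP0 : ∀ s a s', 0 ≤ P s a s') (hP1 : ∀ s a, ∑ s', P s a s' = 1)
    (hQstar : bellmanT P r γ Qstar = Qstar) (hβ : 0 < β) (hα01 : ∀ k, 0 ≤ α k ∧ α k ≤ 1)
    (hαβ : ∀ᶠ k in atTop, α k * β ≤ 1)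
    (hvisit : ∀ s a, Tendsto (fun n => ∑ k ∈ range n, α k * visit (x k) s a) atTop atTop)
    (hnoise : ∀ s a, ∃ l, Tendsto (fun n => ∑ k ∈ range n, α k * visit (x k) s a *
      (sampleBellman r γ (qb k) s a (x k).2.2 - bellmanT P r γ (qb k) s a)) atTop (𝓝 l)) :
    Tendsto qa atTop (𝓝 Qstar) ∧ Tendsto qb atTop (𝓝 Qstar) := by
  obtain ⟨K, hK⟩ := eventually_atTop.1 hαβ
  have hbdd := h.norm_le hγ0 hγ1 hβ.le hα01 hK
  have he : Tendsto (fun k => max ‖qa k - Qstar‖ ‖qb k - Qstar‖) atTop (𝓝 0) := by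
    refine AsymptoticallyLE.tendsto_zero_of_contracting hγ0 hγ1
      (fun k => le_max_of_le_left (norm_nonneg _)) (fun k => max_le
        ((norm_sub_le _ _).trans (add_le_add ((le_max_left _ _).trans (hbdd k)) le_rfl))
        ((norm_sub_le _ _).trans (add_le_add ((le_max_right _ _).trans (hbdd k)) le_rfl)))
      fun c hc => ?_
    have hA := h.asymptoticallyLE_qa hγ0 hP0 hP1 hQstar hα01 hvisit hnoise
      (hc.mono (Eventually.of_forall fun k => le_max_right _ _))
    exact hA.sup (h.asymptoticallyLE_qb hβ hα01 hαβ hvisit hA)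
  constructor <;> rw [tendsto_iff_norm_sub_tendsto_zero] <;>
    refine squeeze_zero (fun k => norm_nonneg _) (fun k => ?_) he
  exacts [le_max_left _ _, le_max_right _ _]

end IsAGT2Path

end Path

section Probability

variable {Ω E : Type*} {m m0 : MeasurableSpace Ω} {μ : Measure Ω}

lemma integrable_of_abs_le [IsFiniteMeasure μ] (hm : m ≤ m0) {f : Ω → ℝ} (hf : Measurable[m] f)
    {C : ℝ} (hC : ∀ ω, |f ω| ≤ C) : Integrable f μ :=
  .of_bound (hf.mono hm le_rfl).aestronglyMeasurable C
    (ae_of_all _ fun ω => (Real.norm_eq_abs _).trans_le (hC ω))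

lemma integral_mul_eq_zero_of_condExp_eq_zero [IsFiniteMeasure μ] (hm : m ≤ m0) {f g : Ω → ℝ}
    (hf : StronglyMeasurable[m] f) (hfg : Integrable (f * g) μ) (hg : Integrable g μ)
    (hce : μ[g | m] =ᵐ[μ] 0) : ∫ ω, f ω * g ω ∂μ = 0 := by
  change ∫ ω, (f * g) ω ∂μ = 0
  rw [← integral_condExp hm]
  refine integral_eq_zero_of_ae ?_
  filter_upwards [condExp_mul_of_stronglyMeasurable_left hf hfg hg, hce] with ω h1 h2
  rw [h1, Pi.mul_apply, h2, Pi.zero_apply, mul_zero]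

lemma integral_sq_add_mul_le [IsProbabilityMeasure μ] (hm : m ≤ m0) {M g : Ω → ℝ}
    (hM : Measurable[m] M) {B : ℝ} (hMB : ∀ ω, |M ω| ≤ B) (hg : Measurable g) {C : ℝ}
    (hgC : ∀ ω, |g ω| ≤ C) (hce : μ[g | m] =ᵐ[μ] 0) (a : ℝ) :
    ∫ ω, (M ω + a * g ω) ^ 2 ∂μ ≤ ∫ ω, M ω ^ 2 ∂μ + a ^ 2 * C ^ 2 := by
  have hMint : Integrable M μ := integrable_of_abs_le hm hM hMB
  have hgint : Integrable g μ := integrable_of_abs_le le_rfl hg hgC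
  have hMB' : ∀ᵐ ω ∂μ, ‖M ω‖ ≤ B := ae_of_all _ fun ω => (Real.norm_eq_abs _).trans_le (hMB ω)
  have hgC' : ∀ᵐ ω ∂μ, ‖g ω‖ ≤ C := ae_of_all _ fun ω => (Real.norm_eq_abs _).trans_le (hgC ω)
  have hM2 : Integrable (fun ω => M ω ^ 2) μ := by
    simpa only [sq] using hMint.bdd_mul hMint.aestronglyMeasurable hMB'
  have hg2 : Integrable (fun ω => g ω ^ 2) μ := by
    simpa only [sq] using hgint.bdd_mul hgint.aestronglyMeasurable hgC'
  have hMg : Integrable (fun ω => M ω * g ω) μ := hgint.bdd_mul hMint.aestronglyMeasurable hMB'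
  have hcross : ∫ ω, M ω * g ω ∂μ = 0 :=
    integral_mul_eq_zero_of_condExp_eq_zero hm hM.stronglyMeasurable hMg hgint hce
  have hg2C : ∫ ω, g ω ^ 2 ∂μ ≤ C ^ 2 := by
    refine (integral_mono hg2 (integrable_const (C ^ 2)) fun ω => ?_).trans (by simp)
    rw [← sq_abs]
    exact pow_le_pow_left₀ (abs_nonneg _) (hgC ω) 2
  have hexpand : (fun ω => (M ω + a * g ω) ^ 2) =
      fun ω => (M ω ^ 2 + 2 * a * (M ω * g ω)) + a ^ 2 * g ω ^ 2 := by
    funext ω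
    ring
  rw [hexpand, integral_add (f := fun ω => M ω ^ 2 + 2 * a * (M ω * g ω))
      (hM2.add (hMg.const_mul _)) (hg2.const_mul _), integral_add hM2 (hMg.const_mul _),
    integral_const_mul, integral_const_mul, hcross]
  nlinarith [mul_le_mul_of_nonneg_left hg2C (sq_nonneg a)]

lemma eLpNorm_one_le_of_integral_sq_le [IsProbabilityMeasure μ] {f : Ω → ℝ}
    (hf : Integrable f μ) (hf2 : Integrable (fun ω => f ω ^ 2) μ) {V : ℝ}
    (hV : ∫ ω, f ω ^ 2 ∂μ ≤ V) : eLpNorm f 1 μ ≤ ENNReal.ofReal ((V + 1) / 2) := by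
  rw [eLpNorm_one_eq_lintegral_enorm, ← ofReal_integral_norm_eq_lintegral_enorm hf]
  refine ENNReal.ofReal_le_ofReal ?_
  calc ∫ ω, ‖f ω‖ ∂μ ≤ ∫ ω, (f ω ^ 2 + 1) / 2 ∂μ :=
        integral_mono hf.norm ((hf2.add (integrable_const 1)).div_const 2) fun ω => by
          rw [Real.norm_eq_abs]
          nlinarith [sq_nonneg (|f ω| - 1), sq_abs (f ω)]
    _ = (∫ ω, f ω ^ 2 ∂μ + 1) / 2 := by
        rw [integral_div, integral_add hf2 (integrable_const 1)]
        simp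
    _ ≤ (V + 1) / 2 := by linarith

section MartingaleDifferences

variable [IsProbabilityMeasure μ] {ℱ : Filtration ℕ m0} {ξ : ℕ → Ω → ℝ} {C : ℝ} (α : ℕ → ℝ)

lemma abs_sum_mul_le_sum (hbdd : ∀ k ω, |ξ k ω| ≤ C) (n : ℕ) (ω : Ω) :
    |∑ k ∈ range n, α k * ξ k ω| ≤ ∑ k ∈ range n, |α k| * C :=
  (abs_sum_le_sum_abs _ _).trans (sum_le_sum fun k _ => by
    rw [abs_mul]; exact mul_le_mul_of_nonneg_left (hbdd k ω) (abs_nonneg _))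

lemma measurable_sum_mul (hξ : ∀ k, Measurable[ℱ (k + 1)] (ξ k)) (n : ℕ) :
    Measurable[ℱ n] (fun ω => ∑ k ∈ range n, α k * ξ k ω) :=
  Finset.measurable_sum _ fun k hk =>
    ((hξ k).mono (ℱ.mono (mem_range.1 hk)) le_rfl).const_mul (α k)

lemma martingale_sum_mul (hξ : ∀ k, Measurable[ℱ (k + 1)] (ξ k))
    (hbdd : ∀ k ω, |ξ k ω| ≤ C) (hce : ∀ k, μ[ξ k | ℱ k] =ᵐ[μ] 0) :
    Martingale (fun n ω => ∑ k ∈ range n, α k * ξ k ω) ℱ μ := by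
  refine martingale_of_condExp_sub_eq_zero_nat
    (fun n => (measurable_sum_mul α hξ n).stronglyMeasurable)
    (fun n => integrable_of_abs_le (ℱ.le n) (measurable_sum_mul α hξ n)
      (abs_sum_mul_le_sum α hbdd n)) fun n => ?_
  have hinc : (fun ω => ∑ k ∈ range (n + 1), α k * ξ k ω) -
      (fun ω => ∑ k ∈ range n, α k * ξ k ω) = α n • ξ n := by
    funext ω
    simp [sum_range_succ]
  rw [hinc]
  filter_upwards [condExp_smul (α n) (ξ n) (ℱ n), hce n] with ω h1 h2
  rw [h1, Pi.smul_apply, h2, Pi.zero_apply, smul_zero]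

lemma integral_sq_sum_mul_le (hξ : ∀ k, Measurable[ℱ (k + 1)] (ξ k))
    (hbdd : ∀ k ω, |ξ k ω| ≤ C) (hce : ∀ k, μ[ξ k | ℱ k] =ᵐ[μ] 0) (n : ℕ) :
    ∫ ω, (∑ k ∈ range n, α k * ξ k ω) ^ 2 ∂μ ≤ C ^ 2 * ∑ k ∈ range n, α k ^ 2 := by
  induction n with
  | zero => simp
  | succ n ih =>
    simp_rw [sum_range_succ]
    refine (integral_sq_add_mul_le (ℱ.le n) (measurable_sum_mul α hξ n)
      (abs_sum_mul_le_sum α hbdd n) ((hξ n).mono (ℱ.le _) le_rfl) (hbdd n) (hce n) (α n)).trans ?_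
    linarith

theorem ae_exists_tendsto_sum_mul (hξ : ∀ k, Measurable[ℱ (k + 1)] (ξ k))
    (hbdd : ∀ k ω, |ξ k ω| ≤ C) (hce : ∀ k, μ[ξ k | ℱ k] =ᵐ[μ] 0)
    (hα : Summable fun k => α k ^ 2) :
    ∀ᵐ ω ∂μ, ∃ l, Tendsto (fun n => ∑ k ∈ range n, α k * ξ k ω) atTop (𝓝 l) := by
  have hmart := martingale_sum_mul α hξ hbdd hce
  have hL1 (n : ℕ) : eLpNorm (fun ω => ∑ k ∈ range n, α k * ξ k ω) 1 μ ≤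
      ENNReal.ofReal ((C ^ 2 * ∑' k, α k ^ 2 + 1) / 2) := by
    have hsq : Integrable (fun ω => (∑ k ∈ range n, α k * ξ k ω) ^ 2) μ :=
      integrable_of_abs_le (ℱ.le n) ((measurable_sum_mul α hξ n).pow_const 2) fun ω => by
        rw [abs_pow]
        exact pow_le_pow_left₀ (abs_nonneg _) (abs_sum_mul_le_sum α hbdd n ω) 2
    refine eLpNorm_one_le_of_integral_sq_le (hmart.integrable n) hsq
      ((integral_sq_sum_mul_le α hξ hbdd hce n).trans ?_)
    exact mul_le_mul_of_nonneg_left (hα.sum_le_tsum _ fun k _ => sq_nonneg _) (sq_nonneg C)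
  filter_upwards [hmart.submartingale.ae_tendsto_limitProcess hL1] with ω hω using ⟨_, hω⟩

end MartingaleDifferences

variable [MeasurableSpace E]

lemma condExp_comp_eq_sum [Fintype E] [MeasurableSingletonClass E]
    [IsFiniteMeasure μ] (hm : m ≤ m0) {Y : Ω → E} (hY : Measurable Y)
    (hind : Indep (MeasurableSpace.comap Y inferInstance) m μ) {H : Ω → E → ℝ}
    (hH : ∀ x, StronglyMeasurable[m] (H · x)) (hint : ∀ x, Integrable (H · x) μ) :
    μ[fun ω => H ω (Y ω) | m] =ᵐ[μ] fun ω => ∑ x, μ.real (Y ⁻¹' {x}) * H ω x := by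
  classical
  set ind : E → Ω → ℝ := fun x => (Y ⁻¹' {x}).indicator 1
  have hind_meas : ∀ x, StronglyMeasurable[MeasurableSpace.comap Y inferInstance] (ind x) :=
    fun x => stronglyMeasurable_const.indicator ⟨{x}, measurableSet_singleton x, rfl⟩
  have hind_int : ∀ x, Integrable (ind x) μ :=
    fun x => (integrable_const 1).indicator (hY (measurableSet_singleton x))
  have hmul_int : ∀ x, Integrable ((H · x) * ind x) μ := fun x =>
    (hint x).mul_bdd (c := 1) ((hind_meas x).mono hY.comap_le).aestronglyMeasurable
      (ae_of_all _ fun ω => by simp only [ind, Set.indicator_apply]; split_ifs <;> simp)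
  have hterm : ∀ x, μ[(H · x) * ind x | m] =ᵐ[μ] fun ω => μ.real (Y ⁻¹' {x}) * H ω x := by
    intro x
    filter_upwards [condExp_mul_of_stronglyMeasurable_left (hH x) (hmul_int x) (hind_int x),
      condExp_indep_eq hY.comap_le hm (hind_meas x) hind] with ω h1 h2
    rw [h1, Pi.mul_apply, h2, integral_indicator_one (hY (measurableSet_singleton x)), mul_comm]
  have hdecomp : (fun ω => H ω (Y ω)) = ∑ x, (H · x) * ind x := by
    funext ω
    simp [ind, Finset.sum_apply, Set.indicator_apply]
  rw [hdecomp]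
  refine (condExp_finsetSum (fun x _ => hmul_int x) m).trans
    ((eventuallyEq_sum fun x _ => hterm x).trans (Eventually.of_forall fun ω => ?_))
  simp [Finset.sum_apply]

def pastFiltration (X : ℕ → Ω → E) (hX : ∀ k, Measurable (X k)) : Filtration ℕ m0 where
  seq n := ⨆ i < n, MeasurableSpace.comap (X i) inferInstance
  mono' _ _ hnm := biSup_mono fun _ hi => hi.trans_le hnm
  le' _ := iSup₂_le fun i _ => (hX i).comap_le

variable {X : ℕ → Ω → E} (hX : ∀ k, Measurable (X k))

lemma comap_le_pastFiltration_succ (k : ℕ) :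
    MeasurableSpace.comap (X k) inferInstance ≤ pastFiltration X hX (k + 1) :=
  le_iSup₂ (f := fun i (_ : i < k + 1) => MeasurableSpace.comap (X i) inferInstance) k
    k.lt_succ_self

lemma measurable_pastFiltration_succ [Countable E] [MeasurableSingletonClass E] {β : Type*}
    [MeasurableSpace β] {k : ℕ} {H : Ω → E → β}
    (hH : ∀ x, Measurable[pastFiltration X hX k] (H · x)) :
    Measurable[pastFiltration X hX (k + 1)] (fun ω => H ω (X k ω)) := by
  let := pastFiltration X hX k
  have hprod : Measurable (fun p : Ω × E => H p.1 p.2) := measurable_from_prod_countable_left hH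
  exact hprod.comp ((measurable_id'' ((pastFiltration X hX).mono k.le_succ)).prodMk
    (Measurable.of_comap_le (comap_le_pastFiltration_succ hX k)))

lemma indep_comap_pastFiltration (hind : iIndepFun X μ) (k : ℕ) :
    Indep (MeasurableSpace.comap (X k) inferInstance) (pastFiltration X hX k) μ := by
  have h := indep_iSup_of_disjoint (fun i => (hX i).comap_le) hind.iIndep
    (Set.disjoint_singleton_left.2 (Set.self_notMem_Iio (a := k)))
  simp only [Set.mem_singleton_iff, iSup_iSup_eq_left, Set.mem_Iio] at h
  exact h

theorem ae_exists_tendsto_sum_sub_sum_measureReal [Fintype E] [MeasurableSingletonClass E]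
    [IsProbabilityMeasure μ] (hind : iIndepFun X μ) {H : ℕ → Ω → E → ℝ}
    (hH : ∀ k x, Measurable[pastFiltration X hX k] (H k · x)) {C : ℝ}
    (hC : ∀ k ω x, |H k ω x| ≤ C) {α : ℕ → ℝ} (hα : Summable fun k => α k ^ 2) :
    ∀ᵐ ω ∂μ, ∃ l, Tendsto (fun n => ∑ k ∈ range n,
      α k * (H k ω (X k ω) - ∑ x, μ.real (X k ⁻¹' {x}) * H k ω x)) atTop (𝓝 l) := by
  set ℱ := pastFiltration X hX
  have hsample : ∀ k, Measurable[ℱ (k + 1)] (fun ω => H k ω (X k ω)) :=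
    fun k => measurable_pastFiltration_succ hX (hH k)
  have hmean : ∀ k, Measurable[ℱ k] (fun ω => ∑ x, μ.real (X k ⁻¹' {x}) * H k ω x) :=
    fun k => Finset.measurable_sum _ fun x _ => (hH k x).const_mul _
  have hlaw : ∀ k, ∑ x, μ.real (X k ⁻¹' {x}) = 1 := fun k => by
    rw [sum_measureReal_preimage_singleton _ fun y _ => hX k (measurableSet_singleton y)]
    simp
  have hmean_le : ∀ k ω, |∑ x, μ.real (X k ⁻¹' {x}) * H k ω x| ≤ C := fun k ω =>
    abs_sum_mul_le (fun _ => measureReal_nonneg) (hlaw k) (hC k ω)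
  refine ae_exists_tendsto_sum_mul α (C := C + C) (ℱ := ℱ)
    (fun k => (hsample k).sub ((hmean k).mono (ℱ.mono k.le_succ) le_rfl))
    (fun k ω => (abs_sub _ _).trans (add_le_add (hC k ω _) (hmean_le k ω))) (fun k => ?_) hα
  have hmean_int := integrable_of_abs_le (μ := μ) (ℱ.le k) (hmean k) (hmean_le k)
  filter_upwards [condExp_sub (integrable_of_abs_le (ℱ.le (k + 1)) (hsample k) fun ω => hC k ω _)
      hmean_int (ℱ k),
    condExp_comp_eq_sum (ℱ.le k) (hX k) (indep_comap_pastFiltration hX hind k)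
      (fun x => (hH k x).stronglyMeasurable)
      (fun x => integrable_of_abs_le (ℱ.le k) (hH k x) fun ω => hC k ω x)] with ω h1 h2
  rw [condExp_of_stronglyMeasurable (ℱ.le k) (hmean k).stronglyMeasurable hmean_int] at h1
  exact h1.trans (by rw [Pi.sub_apply, h2, sub_self]; rfl)

end Probability

section Sampling

variable {S A : Type*} [Fintype S] [Fintype A] [DecidableEq S] [DecidableEq A]

lemma sum_mul_visit_mul (d : S → A → ℝ) (P : S → A → S → ℝ) (g : S → ℝ) (s : S) (a : A) :
    ∑ x : S × A × S, d x.1 x.2.1 * P x.1 x.2.1 x.2.2 * (visit x s a * g x.2.2) =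
      d s a * ∑ s', P s a s' * g s' := by
  simp [Fintype.sum_prod_type, visit, ite_and, mul_sum, mul_assoc]

lemma measurable_pi_pi {Ω ι κ : Type*} {m : MeasurableSpace Ω} {f : Ω → ι → κ → ℝ}
    (h : ∀ i j, Measurable (f · i j)) : Measurable f :=
  measurable_pi_iff.2 fun i => measurable_pi_iff.2 (h i)

variable [MeasurableSpace S] [MeasurableSingletonClass S] [MeasurableSpace A]
  [MeasurableSingletonClass A] {Ω : Type*} [MeasurableSpace Ω] {X : ℕ → Ω → S × A × S}
  {μ : Measure Ω} [IsProbabilityMeasure μ] {P : S → A → S → ℝ} {d : S → A → ℝ} {α : ℕ → ℝ}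

lemma ae_tendsto_sum_mul_visit (hX : ∀ k, Measurable (X k)) (hind : iIndepFun X μ)
    (hlaw : ∀ k x, μ.real (X k ⁻¹' {x}) = d x.1 x.2.1 * P x.1 x.2.1 x.2.2)
    (hP1 : ∀ s a, ∑ s', P s a s' = 1) (hd : ∀ s a, 0 < d s a)
    (hαdiv : Tendsto (fun n => ∑ k ∈ range n, α k) atTop atTop)
    (hα : Summable fun k => α k ^ 2) (s : S) (a : A) :
    ∀ᵐ ω ∂μ, Tendsto (fun n => ∑ k ∈ range n, α k * visit (X k ω) s a) atTop atTop := by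
  have hmean : ∀ k, ∑ x, μ.real (X k ⁻¹' {x}) * visit x s a = d s a := fun k => by
    simpa [hlaw, hP1] using sum_mul_visit_mul d P (fun _ => 1) s a
  filter_upwards [ae_exists_tendsto_sum_sub_sum_measureReal hX hind
    (H := fun _ _ x => visit x s a) (fun _ _ => measurable_const) (C := 1)
    (fun _ _ x => (abs_of_nonneg (visit_nonneg x s a)).trans_le (visit_le_one x s a)) hα]
    with ω ⟨l, hl⟩
  simp only [hmean] at hl
  refine (hl.add_atTop (hαdiv.const_mul_atTop (hd s a))).congr fun n => ?_
  rw [mul_sum, ← sum_add_distrib]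
  exact sum_congr rfl fun k _ => by ring

variable [Nonempty A]

lemma IsAGT2Path.measurable_pastFiltration (hX : ∀ k, Measurable (X k)) {r : S → A → S → ℝ}
    {γ β : ℝ} {QA QB : ℕ → Ω → S → A → ℝ}
    (hpath : ∀ ω, IsAGT2Path r γ β α (X · ω) (QA · ω) (QB · ω))
    (hA0 : Measurable[pastFiltration X hX 0] (QA 0))
    (hB0 : Measurable[pastFiltration X hX 0] (QB 0)) (k : ℕ) :
    Measurable[pastFiltration X hX k] (QA k) ∧ Measurable[pastFiltration X hX k] (QB k) := by
  induction k with
  | zero => exact ⟨hA0, hB0⟩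
  | succ k ih =>
    obtain ⟨hA, hB⟩ := ih
    have happly : ∀ {Q : Ω → S → A → ℝ}, Measurable[pastFiltration X hX k] Q →
        ∀ s a, Measurable[pastFiltration X hX k] (Q · s a) :=
      fun hQ s a => (measurable_pi_apply a).comp ((measurable_pi_apply s).comp hQ)
    refine ⟨measurable_pi_pi fun s a => ?_, measurable_pi_pi fun s a => ?_⟩
    · simp_rw [(hpath _).qa_succ]
      exact measurable_pastFiltration_succ hX (H := fun ω x => (1 - α k * visit x s a) *
        QA k ω s a + α k * visit x s a * sampleBellman r γ (QB k ω) s a x.2.2) fun x =>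
        (measurable_const.mul (happly hA s a)).add
          (measurable_const.mul ((continuous_sampleBellman r γ s a x.2.2).measurable.comp hB))
    · simp_rw [(hpath _).qb_succ]
      exact measurable_pastFiltration_succ hX (H := fun ω x => (1 - α k * β * visit x s a) *
        QB k ω s a + α k * β * visit x s a * QA k ω s a) fun x =>
        (measurable_const.mul (happly hB s a)).add (measurable_const.mul (happly hA s a))

lemma ae_exists_tendsto_sum_noise (hX : ∀ k, Measurable (X k)) (hind : iIndepFun X μ)
    (hlaw : ∀ k x, μ.real (X k ⁻¹' {x}) = d x.1 x.2.1 * P x.1 x.2.1 x.2.2)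
    {r : S → A → S → ℝ} {γ : ℝ} (hγ0 : 0 ≤ γ) (hP0 : ∀ s a s', 0 ≤ P s a s')
    (hP1 : ∀ s a, ∑ s', P s a s' = 1) {QB : ℕ → Ω → S → A → ℝ}
    (hQB : ∀ k, Measurable[pastFiltration X hX k] (QB k)) {M : ℝ} (hM : ∀ k ω, ‖QB k ω‖ ≤ M)
    (hα : Summable fun k => α k ^ 2) (s : S) (a : A) :
    ∀ᵐ ω ∂μ, ∃ l, Tendsto (fun n => ∑ k ∈ range n, α k * visit (X k ω) s a *
      (sampleBellman r γ (QB k ω) s a (X k ω).2.2 - bellmanT P r γ (QB k ω) s a)) atTop (𝓝 l) := by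
  have hmean : ∀ k ω, ∑ x, μ.real (X k ⁻¹' {x}) * (visit x s a *
      (sampleBellman r γ (QB k ω) s a x.2.2 - bellmanT P r γ (QB k ω) s a)) = 0 := fun k ω => by
    simp only [hlaw]
    refine (sum_mul_visit_mul d P (fun s' => sampleBellman r γ (QB k ω) s a s' -
      bellmanT P r γ (QB k ω) s a) s a).trans ?_
    simp [mul_sub, sum_sub_distrib, ← sum_mul, hP1, bellmanT_apply]
  have hbound : ∀ k ω x, |visit x s a * (sampleBellman r γ (QB k ω) s a x.2.2 -
      bellmanT P r γ (QB k ω) s a)| ≤ (‖r‖ + γ * M) + (‖r‖ + γ * M) := fun k ω x => by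
    have hγM : ‖r‖ + γ * ‖QB k ω‖ ≤ ‖r‖ + γ * M := by gcongr; exact hM k ω
    rw [abs_mul, abs_of_nonneg (visit_nonneg x s a)]
    refine (mul_le_of_le_one_left (abs_nonneg _) (visit_le_one x s a)).trans ((abs_sub _ _).trans
      (add_le_add ((abs_sampleBellman_le hγ0 _ s a _).trans hγM)
        ((abs_bellmanT_le hγ0 hP0 hP1 _ s a).trans hγM)))
  filter_upwards [ae_exists_tendsto_sum_sub_sum_measureReal hX hind
    (H := fun k ω x => visit x s a *
      (sampleBellman r γ (QB k ω) s a x.2.2 - bellmanT P r γ (QB k ω) s a))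
    (fun k x => measurable_const.mul
      (((continuous_sampleBellman r γ s a x.2.2).measurable.comp (hQB k)).sub
        ((continuous_bellmanT_apply P r γ s a).measurable.comp (hQB k)))) hbound hα]
    with ω ⟨l, hl⟩
  refine ⟨l, hl.congr fun n => sum_congr rfl fun k _ => ?_⟩
  rw [hmean, sub_zero, mul_assoc]

end Sampling

lemma eventually_mul_le_one_of_summable_sq {α : ℕ → ℝ} (hα : Summable fun k => α k ^ 2)
    {β : ℝ} (hβ : 0 < β) : ∀ᶠ k in atTop, α k * β ≤ 1 := by
  filter_upwards [hα.tendsto_atTop_zero.eventually_lt_const (by positivity : (0 : ℝ) < (1 / β) ^ 2)]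
    with k hk
  rw [← le_div_iff₀ hβ]
  exact (le_abs_self _).trans (abs_lt_of_sq_lt_sq hk (by positivity)).le

theorem agt2_ql_convergence
    {S A : Type*} [Fintype S] [Fintype A] [Nonempty S] [Nonempty A]
    [DecidableEq S] [DecidableEq A]
    [MeasurableSpace S] [MeasurableSingletonClass S]
    [MeasurableSpace A] [MeasurableSingletonClass A]
    (P r : S → A → S → ℝ) (γ : ℝ) (hγ0 : 0 ≤ γ) (hγ1 : γ < 1)
    (hP0 : ∀ s a s', 0 ≤ P s a s') (hP1 : ∀ s a, ∑ s', P s a s' = 1)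
    (Qstar : S → A → ℝ) (hQstar : bellmanT P r γ Qstar = Qstar)
    (β : ℝ) (hβ : 0 < β)
    (α : ℕ → ℝ) (hα01 : ∀ k, 0 ≤ α k ∧ α k ≤ 1)
    (hαdiv : Tendsto (fun n => ∑ k ∈ Finset.range n, α k) atTop atTop)
    (hαsq : Summable fun k => (α k) ^ 2)
    (d : S → A → ℝ) (hd : ∀ s a, 0 < d s a)
    {Ω : Type*} [MeasurableSpace Ω] (μ : Measure Ω) [IsProbabilityMeasure μ]
    (X : ℕ → Ω → S × A × S)
    (hXmeas : ∀ k, Measurable (X k))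
    (hXindep : iIndepFun X μ)
    (hXlaw : ∀ k (s : S) (a : A) (s' : S),
      μ {ω | X k ω = (s, a, s')} = ENNReal.ofReal (d s a * P s a s'))
    (QA QB : ℕ → Ω → S → A → ℝ) (QA0 QB0 : S → A → ℝ)
    (hQA0 : ∀ ω, QA 0 ω = QA0) (hQB0 : ∀ ω, QB 0 ω = QB0)
    (hQArec : ∀ k ω s a, QA (k + 1) ω s a = QA k ω s a +
      α k * (if s = (X k ω).1 ∧ a = (X k ω).2.1 then
          r (X k ω).1 (X k ω).2.1 (X k ω).2.2 + γ * maxQ (QB k ω) (X k ω).2.2 -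
            QA k ω (X k ω).1 (X k ω).2.1
        else 0))
    (hQBrec : ∀ k ω s a, QB (k + 1) ω s a = QB k ω s a +
      α k * β * (if s = (X k ω).1 ∧ a = (X k ω).2.1 then
          QA k ω (X k ω).1 (X k ω).2.1 - QB k ω (X k ω).1 (X k ω).2.1
        else 0)) :
    ∀ᵐ ω ∂μ, ∀ s a,
      Tendsto (fun k => QA k ω s a) atTop (nhds (Qstar s a)) ∧
      Tendsto (fun k => QB k ω s a) atTop (nhds (Qstar s a)) := by
  have hpath (ω : Ω) : IsAGT2Path r γ β α (X · ω) (QA · ω) (QB · ω) :=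
    .of_update (hQArec · ω) (hQBrec · ω)
  have hαβ := eventually_mul_le_one_of_summable_sq hαsq hβ
  obtain ⟨K, hK⟩ := eventually_atTop.1 hαβ
  have hbdd (k : ℕ) (ω : Ω) :
      ‖QB k ω‖ ≤ (1 + 2 * β) ^ K * max (max ‖QA0‖ ‖QB0‖) (‖r‖ / (1 - γ)) := by
    simpa only [hQA0, hQB0] using
      (le_max_right _ _).trans ((hpath ω).norm_le hγ0 hγ1 hβ.le hα01 hK k)
  have hadapted := IsAGT2Path.measurable_pastFiltration hXmeas hpath
    (by simp only [funext hQA0]; exact measurable_const)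
    (by simp only [funext hQB0]; exact measurable_const)
  have hlaw (k : ℕ) : ∀ x : S × A × S,
      μ.real (X k ⁻¹' {x}) = d x.1 x.2.1 * P x.1 x.2.1 x.2.2 := by
    rintro ⟨s, a, s'⟩
    rw [measureReal_def, ← ENNReal.toReal_ofReal (mul_nonneg (hd s a).le (hP0 s a s')),
      ← hXlaw k s a s']
    rfl
  filter_upwards [ae_all_iff.2 fun s => ae_all_iff.2 fun a =>
      ae_tendsto_sum_mul_visit hXmeas hXindep hlaw hP1 hd hαdiv hαsq s a,
    ae_all_iff.2 fun s => ae_all_iff.2 fun a =>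
      ae_exists_tendsto_sum_noise hXmeas hXindep hlaw hγ0 hP0 hP1 (fun k => (hadapted k).2)
        hbdd hαsq s a] with ω hvisit hnoise
  obtain ⟨hA, hB⟩ := (hpath ω).tendsto hγ0 hγ1 hP0 hP1 hQstar hβ hα01 hαβ hvisit hnoise
  exact fun s a => ⟨tendsto_pi_nhds.1 (tendsto_pi_nhds.1 hA s) a,
    tendsto_pi_nhds.1 (tendsto_pi_nhds.1 hB s) a⟩
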